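/- Fix an integer k ≥ 3 and let c = 2^{-13}. For all sufficiently large n, the total number f(n,C_k) of labelled C_k-free oriented graphs on [n] satisfies f(n,C_k) ≥ 2^{c·n} · |F_0| ≥ 2^{C(n,2) + c·n}, where F_0 is the set of acyclic oriented graphs on [n]. -/

import Mathlib

open scoped Classical

/-- An arc set on `Fin n`: a digraph on vertex set `[n]` is identified with its
finite set of arcs. -/
abbrev ArcSet (n : ℕ) := Finset (Fin n × Fin n)

/-- A digraph is loopless. -/
def IsLoopless {n : ℕ} (E : ArcSet n) : Prop := ∀ v : Fin n, (v, v) ∉ E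

/-- An oriented graph: loopless and at most one of the arcs `(u,v)`, `(v,u)`
is present for each pair. -/
def IsOriented {n : ℕ} (E : ArcSet n) : Prop :=
  IsLoopless E ∧ ∀ u v : Fin n, (u, v) ∈ E → (v, u) ∉ E

/-- `E` contains a (not necessarily induced) copy of the directed cycle `C_k`. -/
def ContainsCycle {n : ℕ} (k : ℕ) (E : ArcSet n) : Prop :=
  ∃ f : ZMod k → Fin n, Function.Injective f ∧ ∀ i : ZMod k, (f i, f (i + 1)) ∈ E

/-- `E` is `C_k`-free. -/
def CkFree {n : ℕ} (k : ℕ) (E : ArcSet n) : Prop := ¬ ContainsCycle k E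

/-- The number of backwards arcs of `E` with respect to the ordering `σ`:
arcs `(u,v)` with `σ u > σ v`. -/
def backCount {n : ℕ} (E : ArcSet n) (σ : Equiv.Perm (Fin n)) : ℕ :=
  (E.filter fun e => σ e.2 < σ e.1).card

/-- `b(E)`: the minimum number of backwards arcs over all orderings, i.e. the
number of backwards arcs in a transitive-optimal ordering. -/
noncomputable def bMin {n : ℕ} (E : ArcSet n) : ℕ :=
  Finset.univ.inf' Finset.univ_nonempty (backCount E)

/-- `E` is acyclic: it contains no directed cycle of any positive length. -/
def IsAcyclic {n : ℕ} (E : ArcSet n) : Prop :=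
  ∀ l : ℕ, 0 < l → ¬ ContainsCycle l E

/-- `F_0(n)`: the set of labelled acyclic oriented graphs on `[n]`. -/
noncomputable def F0 (n : ℕ) : Finset (ArcSet n) :=
  Finset.univ.filter fun E => IsOriented E ∧ IsAcyclic E

/-- The number of labelled `C_k`-free oriented graphs on `[n]`. -/
noncomputable def fnk (n k : ℕ) : ℕ :=
  (Finset.univ.filter fun E : ArcSet n => IsOriented E ∧ CkFree k E).card

/-!
List the vertices of an acyclic oriented graph `E` in a topological order and cut the order into
`m = ⌊n/L⌋` blocks of `L` consecutive vertices, with `L = 4` if `k = 3` and `L = 3` otherwise.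
For a set `X` of blocks, erase the arcs of `E` inside the blocks of `X` and put a directed
`L`-cycle on each of them. The block index never decreases along an arc of the result, so its
only cycles are these `L`-cycles: it is a `C_k`-free oriented graph whose cycles reveal the blocks
of `X`, and `(E, X)` is recovered from it together with the erased arcs, which allow at most
`3^{C(L,2)} ≤ 729` choices per block. Weighting `(E, X)` by `729^{m - |X|}`, the total weight
is `|F_0| 730^m` while every fibre weighs at most `729^m`; hence
`f(n,C_k) ≥ (730/729)^{n/4} |F_0| ≥ 2^{n/8192} |F_0|`.
Finally `|F_0| ≥ 2^{C(n,2)}`, counting the graphs all of whose arcs go up in `[n]`.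
-/

open Finset

namespace ZMod

variable {l : ℕ} [NeZero l]

lemma le_of_forall_le_add_one {β : Type*} [Preorder β] {g : ZMod l → β}
    (h : ∀ i, g i ≤ g (i + 1)) (i j : ZMod l) : g i ≤ g j := by
  have step : ∀ t : ℕ, g i ≤ g (i + t) := by
    intro t
    induction t with
    | zero => simp
    | succ t ih => exact ih.trans (by simpa [add_assoc] using h (i + t))
  simpa using step (j - i).val

lemma not_forall_lt_add_one (g : ZMod l → ℕ) : ¬ ∀ i, g i < g (i + 1) := fun h =>
  (h 0).not_ge (le_of_forall_le_add_one (fun i => (h i).le) _ _)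

lemma eq_of_injective_of_add_one {L : ℕ} [NeZero L] {g : ZMod l → ZMod L}
    (hg : Function.Injective g) (h : ∀ i, g (i + 1) = g i + 1) : l = L := by
  have shift : ∀ t : ℕ, g t = g 0 + t := by
    intro t
    induction t with
    | zero => simp
    | succ t ih => push_cast; rw [h, ih, add_assoc]
  have hdvd : L ∣ l := by
    rw [← ZMod.natCast_eq_zero_iff]
    simpa using (shift l).symm
  have hle : l ≤ L := by
    simpa [ZMod.card] using Fintype.card_le_of_injective g hg
  exact le_antisymm hle (Nat.le_of_dvd (Nat.pos_of_neZero l) hdvd)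

end ZMod

variable {n : ℕ}

lemma containsCycle_of_iterate {E : ArcSet n} (s : Fin n → Fin n) (x : Fin n)
    (h : ∀ t, (s^[t] x, s^[t + 1] x) ∈ E) : ∃ l, 0 < l ∧ ContainsCycle l E := by
  obtain ⟨a, b, hab, heq⟩ := Finite.exists_ne_map_eq_of_infinite (fun t => s^[t] x)
  wlog hlt : a < b generalizing a b
  · exact this b a hab.symm heq.symm (by omega)
  set y := s^[a] x
  have hy : Function.IsPeriodicPt s (b - a) y := by
    simp only [Function.IsPeriodicPt, Function.IsFixedPt, y, ← Function.iterate_add_apply,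
      Nat.sub_add_cancel hlt.le]
    exact heq.symm
  set l := Function.minimalPeriod s y
  have hl : 0 < l := hy.minimalPeriod_pos (by omega)
  have : NeZero l := ⟨hl.ne'⟩
  refine ⟨l, hl, fun i => s^[i.val] y, fun i j hij => ?_, fun i => ?_⟩
  · exact ZMod.val_injective l
      (Function.iterate_injOn_Iio_minimalPeriod (ZMod.val_lt i) (ZMod.val_lt j) hij)
  · have hsucc : s^[(i + 1).val] y = s^[i.val + 1] y := by
      rw [ZMod.val_add, ZMod.val_one_eq_one_mod, Nat.add_mod_mod,
        (Function.isPeriodicPt_minimalPeriod s y).iterate_mod_apply]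
    simpa only [hsucc, y, ← Function.iterate_add_apply, Nat.add_right_comm] using h (i.val + a)

def IsTopOrder (σ : Equiv.Perm (Fin n)) (E : ArcSet n) : Prop := ∀ e ∈ E, σ e.1 < σ e.2

lemma IsAcyclic.not_transGen_self {E : ArcSet n} (hE : IsAcyclic E) (v : Fin n) :
    ¬ Relation.TransGen (fun a b => (a, b) ∈ E) v v := by
  set r : Fin n → Fin n → Prop := fun a b => (a, b) ∈ E
  intro hv
  have hsucc : ∀ u, Relation.TransGen r u u → ∃ w, r u w ∧ Relation.TransGen r w w := by
    intro u hu
    obtain ⟨w, huw, hwu⟩ := Relation.TransGen.head'_iff.mp hu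
    exact ⟨w, huw, Relation.TransGen.tail' hwu huw⟩
  choose! s hs using hsucc
  have hiter : ∀ t, Relation.TransGen r (s^[t] v) (s^[t] v) := by
    intro t
    induction t with
    | zero => exact hv
    | succ t ih => simpa [Function.iterate_succ_apply'] using (hs _ ih).2
  obtain ⟨l, hl, hc⟩ := containsCycle_of_iterate s v fun t => by
    simpa [Function.iterate_succ_apply'] using (hs _ (hiter t)).1
  exact hE l hl hc

/-- Sorting the vertices by the number of their predecessors gives a topological order. -/
lemma IsAcyclic.exists_isTopOrder {E : ArcSet n} (hE : IsAcyclic E) :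
    ∃ σ : Equiv.Perm (Fin n), IsTopOrder σ E := by
  set r : Fin n → Fin n → Prop := fun a b => (a, b) ∈ E
  set height : Fin n → ℕ := fun v => #{u | Relation.TransGen r u v}
  have hheight : ∀ e ∈ E, height e.1 < height e.2 := by
    intro e he
    refine card_lt_card ⟨fun u hu => ?_, fun hsub => ?_⟩
    · simp only [mem_filter, mem_univ, true_and] at hu ⊢
      exact hu.tail he
    · have := hsub (mem_filter.mpr ⟨mem_univ _, Relation.TransGen.single he⟩)
      exact hE.not_transGen_self e.1 (mem_filter.mp this).2
  refine ⟨(Tuple.sort height).symm, fun e he => lt_of_not_ge fun hle => ?_⟩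
  have := Tuple.monotone_sort height hle
  simp only [Function.comp_apply, Equiv.apply_symm_apply] at this
  exact (hheight e he).not_ge this

lemma IsTopOrder.isAcyclic {σ : Equiv.Perm (Fin n)} {E : ArcSet n} (hσ : IsTopOrder σ E) :
    IsAcyclic E := by
  rintro l hl ⟨f, -, hf⟩
  have : NeZero l := ⟨hl.ne'⟩
  exact ZMod.not_forall_lt_add_one (fun i => (σ (f i) : ℕ)) fun i => hσ _ (hf i)

/-- Junk unless `E` is acyclic. -/
noncomputable def topOrder (E : ArcSet n) : Equiv.Perm (Fin n) :=
  Classical.epsilon (IsTopOrder · E)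

lemma IsAcyclic.isTopOrder_topOrder {E : ArcSet n} (hE : IsAcyclic E) :
    IsTopOrder (topOrder E) E :=
  Classical.epsilon_spec hE.exists_isTopOrder

lemma two_pow_choose_two_le_card_F0 (n : ℕ) : 2 ^ n.choose 2 ≤ #(F0 n) := by
  set P : ArcSet n := univ.filter fun e => e.1 < e.2
  have hsub : P.powerset ⊆ F0 n := by
    intro A hA
    have hlt : ∀ e ∈ A, e.1 < e.2 := fun e he => (mem_filter.mp (mem_powerset.mp hA he)).2
    simp only [F0, mem_filter, mem_univ, true_and]
    refine ⟨⟨fun v hv => (hlt _ hv).false, fun u v huv hvu => (hlt _ huv).asymm (hlt _ hvu)⟩,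
      IsTopOrder.isAcyclic (σ := 1) hlt⟩
  calc 2 ^ n.choose 2 = #P.powerset := by
        rw [card_powerset, Fintype.card_product_filter_lt, Fintype.card_fin]
    _ ≤ #(F0 n) := card_le_card hsub

noncomputable def cycleSets (G : ArcSet n) : Finset (Finset (Fin n)) :=
  univ.filter fun S => ∃ l > 0, ∃ f : ZMod l → Fin n,
    Function.Injective f ∧ (∀ i, (f i, f (i + 1)) ∈ G) ∧ Set.range f = S

def CoveredBy {α : Type*} (𝒮 : Finset (Finset α)) (e : α × α) : Prop :=
  ∃ S ∈ 𝒮, e.1 ∈ S ∧ e.2 ∈ S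

section Rewire

variable (σ : Equiv.Perm (Fin n)) (L : ℕ)

def block (i : ℕ) : Finset (Fin n) := univ.filter fun v => (σ v : ℕ) / L = i

def IsInternal (X : Finset ℕ) (e : Fin n × Fin n) : Prop :=
  (σ e.1 : ℕ) / L = (σ e.2 : ℕ) / L ∧ (σ e.1 : ℕ) / L ∈ X

noncomputable def gadget (X : Finset ℕ) : ArcSet n :=
  univ.filter fun e => IsInternal σ L X e ∧ ((σ e.2 : ℕ) : ZMod L) = (σ e.1 : ℕ) + 1

noncomputable def rewire (E : ArcSet n) (X : Finset ℕ) : ArcSet n :=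
  E.filter (fun e => ¬ IsInternal σ L X e) ∪ gadget σ L X

variable {σ L}

lemma mem_block {i : ℕ} {v : Fin n} : v ∈ block σ L i ↔ (σ v : ℕ) / L = i := by
  simp [block]

lemma mem_rewire {E : ArcSet n} {X : Finset ℕ} {e : Fin n × Fin n} :
    e ∈ rewire σ L E X ↔ e ∈ E ∧ ¬ IsInternal σ L X e ∨
      IsInternal σ L X e ∧ ((σ e.2 : ℕ) : ZMod L) = (σ e.1 : ℕ) + 1 := by
  simp [rewire, gadget]

lemma eq_of_mem_block_of_natCast_eq {i : ℕ} {u v : Fin n} (hu : u ∈ block σ L i)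
    (hv : v ∈ block σ L i) (h : ((σ u : ℕ) : ZMod L) = (σ v : ℕ)) : u = v :=
  σ.injective <| Fin.ext <| Nat.ext_div_modEq ((mem_block.mp hu).trans (mem_block.mp hv).symm)
    ((ZMod.natCast_eq_natCast_iff _ _ _).mp h)

lemma card_block_le [NeZero L] (i : ℕ) : #(block σ L i) ≤ L := by
  simpa using card_le_card_of_injOn (fun v => ((σ v : ℕ) : ZMod L)) (t := univ)
    (fun _ _ => mem_univ _) fun u hu v hv => eq_of_mem_block_of_natCast_eq hu hv

lemma block_injOn [NeZero L] : Set.InjOn (block σ L) (range (n / L)) := by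
  intro i hi j _ hij
  have hiL : i * L < n := (Nat.mul_lt_mul_of_pos_right (mem_range.mp hi)
    (Nat.pos_of_neZero L)).trans_le (Nat.div_mul_le_self n L)
  have hv : σ.symm ⟨i * L, hiL⟩ ∈ block σ L i := by
    simp [mem_block, Nat.mul_div_cancel _ (Nat.pos_of_neZero L)]
  rw [hij, mem_block] at hv
  simpa [Nat.mul_div_cancel _ (Nat.pos_of_neZero L)] using hv

variable {E : ArcSet n} {X : Finset ℕ}

lemma div_le_div_of_mem_rewire (hσ : IsTopOrder σ E) {e : Fin n × Fin n}
    (he : e ∈ rewire σ L E X) : (σ e.1 : ℕ) / L ≤ (σ e.2 : ℕ) / L := by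
  rcases mem_rewire.mp he with ⟨he, -⟩ | ⟨⟨heq, -⟩, -⟩
  · exact Nat.div_le_div_right (hσ e he).le
  · exact heq.le

lemma rewire_isOriented (hσ : IsTopOrder σ E) (hL : 3 ≤ L) : IsOriented (rewire σ L E X) := by
  have hL' : ¬ L ∣ 1 ∧ ¬ L ∣ 2 := ⟨fun h => by have := Nat.le_of_dvd one_pos h; omega,
    fun h => by have := Nat.le_of_dvd two_pos h; omega⟩
  refine ⟨fun v hv => ?_, fun u v huv hvu => ?_⟩
  · rcases mem_rewire.mp hv with ⟨hv, -⟩ | ⟨-, hv⟩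
    · exact (hσ _ hv).false
    · apply hL'.1
      rw [← ZMod.natCast_eq_zero_iff]
      simpa using hv
  · rcases mem_rewire.mp huv with ⟨huv, hext⟩ | ⟨hint, huv⟩
    · rcases mem_rewire.mp hvu with ⟨hvu, -⟩ | ⟨hint, -⟩
      · exact (hσ _ huv).asymm (hσ _ hvu)
      · exact hext ⟨hint.1.symm, hint.1 ▸ hint.2⟩
    · rcases mem_rewire.mp hvu with ⟨-, hext⟩ | ⟨-, hvu⟩
      · exact hext ⟨hint.1.symm, hint.1 ▸ hint.2⟩
      · apply hL'.2
        rw [← ZMod.natCast_eq_zero_iff]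
        have : ((σ u : ℕ) : ZMod L) = (σ u : ℕ) + 2 := by
          linear_combination hvu + huv
        simpa using this

lemma cycle_in_rewire (hσ : IsTopOrder σ E) [NeZero L] {l : ℕ} [NeZero l]
    {f : ZMod l → Fin n} (hf : Function.Injective f)
    (hcyc : ∀ i, (f i, f (i + 1)) ∈ rewire σ L E X) :
    l = L ∧ ∃ q ∈ X, univ.image f = block σ L q := by
  set q := (σ (f 0) : ℕ) / L
  -- the block index never decreases along an arc, so it is constant along a cycle
  have hmono : ∀ i, (σ (f i) : ℕ) / L ≤ (σ (f (i + 1)) : ℕ) / L := fun i =>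
    div_le_div_of_mem_rewire hσ (hcyc i)
  have hblock : ∀ i, (σ (f i) : ℕ) / L = q := fun i =>
    le_antisymm (ZMod.le_of_forall_le_add_one hmono _ _) (ZMod.le_of_forall_le_add_one hmono _ _)
  have hqX : q ∈ X := by
    obtain ⟨i, hi⟩ : ∃ i, ¬ σ (f i) < σ (f (i + 1)) := by
      by_contra! h
      exact ZMod.not_forall_lt_add_one (fun i => (σ (f i) : ℕ)) h
    rcases mem_rewire.mp (hcyc i) with ⟨he, -⟩ | ⟨⟨-, hX⟩, -⟩
    · exact absurd (hσ _ he) hi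
    · simpa only [hblock] using hX
  have hstep : ∀ i, ((σ (f (i + 1)) : ℕ) : ZMod L) = (σ (f i) : ℕ) + 1 := by
    intro i
    rcases mem_rewire.mp (hcyc i) with ⟨-, hext⟩ | ⟨-, h⟩
    · exact absurd ⟨by simp only [hblock], by simpa only [hblock] using hqX⟩ hext
    · exact h
  have hmem : ∀ i, f i ∈ block σ L q := fun i => mem_block.mpr (hblock i)
  have hl : l = L := ZMod.eq_of_injective_of_add_one
    (fun i j h => hf (eq_of_mem_block_of_natCast_eq (hmem i) (hmem j) h)) hstep
  refine ⟨hl, q, hqX, eq_of_subset_of_card_le ?_ ?_⟩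
  · simpa [subset_iff] using hmem
  · rw [card_image_of_injective _ hf, card_univ, ZMod.card, hl]
    exact card_block_le q

lemma exists_cycle_block [NeZero L] {q : ℕ} (hq : q ∈ X) (hqn : q < n / L) :
    ∃ f : ZMod L → Fin n, Function.Injective f ∧ (∀ i, (f i, f (i + 1)) ∈ rewire σ L E X) ∧
      f 0 ∈ block σ L q := by
  have hfit : ∀ t : ZMod L, q * L + t.val < n := fun t => by
    have := (Nat.le_div_iff_mul_le (Nat.pos_of_neZero L)).mp hqn
    have := ZMod.val_lt t
    nlinarith
  have hdiv : ∀ t : ZMod L, (q * L + t.val) / L = q := fun t => by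
    rw [add_comm, Nat.add_mul_div_right _ _ (Nat.pos_of_neZero L),
      Nat.div_eq_of_lt (ZMod.val_lt t), zero_add]
  refine ⟨fun t => σ.symm ⟨q * L + t.val, hfit t⟩, fun s t hst => ?_, fun t => ?_, ?_⟩
  · exact ZMod.val_injective L (by simpa using hst)
  · refine mem_rewire.mpr (Or.inr ⟨⟨?_, ?_⟩, ?_⟩) <;> simp [hdiv, hq]
  · simpa [mem_block] using hdiv 0

lemma rewire_ckFree (hσ : IsTopOrder σ E) [NeZero L] {k : ℕ} [NeZero k] (hLk : L ≠ k) :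
    CkFree k (rewire σ L E X) := fun ⟨_, hf, hcyc⟩ => hLk (cycle_in_rewire hσ hf hcyc).1.symm

lemma cycleSets_rewire (hσ : IsTopOrder σ E) [NeZero L] (hX : X ⊆ range (n / L)) :
    cycleSets (rewire σ L E X) = X.image (block σ L) := by
  ext S
  simp only [cycleSets, mem_filter, mem_univ, true_and, mem_image]
  constructor
  · rintro ⟨l, hl, f, hf, hcyc, hS⟩
    have : NeZero l := ⟨hl.ne'⟩
    obtain ⟨-, q, hq, himg⟩ := cycle_in_rewire hσ hf hcyc
    exact ⟨q, hq, by rw [← himg, ← coe_inj, ← hS, coe_image, coe_univ, Set.image_univ]⟩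
  · rintro ⟨q, hq, rfl⟩
    obtain ⟨f, hf, hcyc, hf0⟩ := exists_cycle_block hq (mem_range.mp (hX hq))
    obtain ⟨-, q', -, himg⟩ := cycle_in_rewire hσ hf hcyc
    have hq' : f 0 ∈ block σ L q' := himg ▸ mem_image_of_mem f (mem_univ 0)
    rw [mem_block] at hf0 hq'
    refine ⟨L, Nat.pos_of_neZero L, f, hf, hcyc, ?_⟩
    rw [← hf0, hq', ← himg, coe_image, coe_univ, Set.image_univ]

lemma isInternal_iff_coveredBy {e : Fin n × Fin n} :
    IsInternal σ L X e ↔ CoveredBy (X.image (block σ L)) e := by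
  simp only [IsInternal, CoveredBy, mem_image]
  constructor
  · rintro ⟨heq, hX⟩
    exact ⟨_, ⟨_, hX, rfl⟩, mem_block.mpr rfl, mem_block.mpr heq.symm⟩
  · rintro ⟨_, ⟨q, hq, rfl⟩, h1, h2⟩
    rw [mem_block] at h1 h2
    exact ⟨h1.trans h2.symm, h1 ▸ hq⟩

lemma filter_not_coveredBy_rewire (hσ : IsTopOrder σ E) [NeZero L] (hX : X ⊆ range (n / L)) :
    (rewire σ L E X).filter (fun e => ¬ CoveredBy (cycleSets (rewire σ L E X)) e) =
      E.filter (fun e => ¬ CoveredBy (cycleSets (rewire σ L E X)) e) := by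
  ext e
  simp only [cycleSets_rewire hσ hX, ← isInternal_iff_coveredBy, mem_filter, mem_rewire]
  tauto

lemma eq_of_rewire_eq {σ' : Equiv.Perm (Fin n)} {E' : ArcSet n} {X' : Finset ℕ}
    (hσ : IsTopOrder σ E) (hσ' : IsTopOrder σ' E') [NeZero L]
    (hX : X ⊆ range (n / L)) (hX' : X' ⊆ range (n / L))
    (h : rewire σ L E X = rewire σ' L E' X')
    (hcov : E.filter (CoveredBy (cycleSets (rewire σ L E X))) =
      E'.filter (CoveredBy (cycleSets (rewire σ L E X)))) : E = E' := by
  rw [← filter_union_filter_not_eq (CoveredBy (cycleSets (rewire σ L E X))) E,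
    ← filter_union_filter_not_eq (CoveredBy (cycleSets (rewire σ L E X))) E', hcov,
    ← filter_not_coveredBy_rewire hσ hX, h, filter_not_coveredBy_rewire hσ' hX']

lemma rewire_injOn_right (hσ : IsTopOrder σ E) [NeZero L] :
    Set.InjOn (rewire σ L E) {X | X ⊆ range (n / L)} := by
  intro X hX X' hX' h
  have himg := congrArg (fun G => (cycleSets G : Set (Finset (Fin n)))) h
  simp only [cycleSets_rewire hσ hX, cycleSets_rewire hσ hX', coe_image] at himg
  exact coe_injective
    ((block_injOn.image_eq_image_iff (coe_subset.mpr hX) (coe_subset.mpr hX')).mp himg)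

end Rewire

lemma card_le_three_pow {α : Type*} (U : Finset (α × α)) (𝒜 : Finset (Finset (α × α)))
    (hcov : ∀ A ∈ 𝒜, ∀ a ∈ A, a ∈ U ∨ a.swap ∈ U) (hanti : ∀ A ∈ 𝒜, ∀ a ∈ A, a.swap ∉ A) :
    #𝒜 ≤ 3 ^ #U := by
  classical
  let code : Finset (α × α) → (U → Fin 3) := fun A u =>
    if (u : α × α) ∈ A then 1 else if (u : α × α).swap ∈ A then 2 else 0
  have hsub : ∀ A ∈ 𝒜, ∀ A' ∈ 𝒜, code A = code A' → A ⊆ A' := by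
    intro A hA A' _ h a ha
    rcases hcov A hA a ha with hu | hu
    · have := congrFun h ⟨a, hu⟩
      simp only [code, ha, if_true] at this
      split_ifs at this with h₁ h₂ <;> first | exact h₁ | simp at this
    · have := congrFun h ⟨a.swap, hu⟩
      simp only [code, hanti A hA a ha, Prod.swap_swap, ha, if_false, if_true] at this
      split_ifs at this with h₁ h₂ <;> first | exact h₂ | simp at this
  calc #𝒜 ≤ Fintype.card (U → Fin 3) :=
        card_le_card_of_injOn code (fun _ _ => mem_coe.mpr (mem_univ _))
          fun A hA A' hA' h => (hsub A hA A' hA' h).antisymm (hsub A' hA' A hA h.symm)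
    _ = 3 ^ #U := by simp

section Counting

variable (L : ℕ)

noncomputable def rewireDomain (n : ℕ) : Finset (ArcSet n × Finset ℕ) :=
  F0 n ×ˢ (range (n / L)).powerset

noncomputable def rewireFiber (G : ArcSet n) : Finset (ArcSet n × Finset ℕ) :=
  (rewireDomain L n).filter fun p => rewire (topOrder p.1) L p.1 p.2 = G

variable {L}

lemma mem_rewireDomain {p : ArcSet n × Finset ℕ} :
    p ∈ rewireDomain L n ↔ (IsOriented p.1 ∧ IsAcyclic p.1) ∧ p.2 ⊆ range (n / L) := by
  simp [rewireDomain, F0]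

variable [NeZero L]

lemma card_eq_card_cycleSets {p : ArcSet n × Finset ℕ} (hp : p ∈ rewireDomain L n) :
    #p.2 = #(cycleSets (rewire (topOrder p.1) L p.1 p.2)) := by
  obtain ⟨⟨-, hacyc⟩, hX⟩ := mem_rewireDomain.mp hp
  rw [cycleSets_rewire hacyc.isTopOrder_topOrder hX,
    card_image_of_injOn (block_injOn.mono (coe_subset.mpr hX))]

lemma card_le_of_mem_cycleSets {p : ArcSet n × Finset ℕ} (hp : p ∈ rewireDomain L n)
    {S : Finset (Fin n)} (hS : S ∈ cycleSets (rewire (topOrder p.1) L p.1 p.2)) : #S ≤ L := by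
  obtain ⟨⟨-, hacyc⟩, hX⟩ := mem_rewireDomain.mp hp
  rw [cycleSets_rewire hacyc.isTopOrder_topOrder hX] at hS
  obtain ⟨q, -, rfl⟩ := mem_image.mp hS
  exact card_block_le q

lemma injOn_filter_coveredBy (G : ArcSet n) :
    Set.InjOn (fun p : ArcSet n × Finset ℕ => p.1.filter (CoveredBy (cycleSets G)))
      (rewireFiber L G) := by
  intro p hp p' hp' h
  rw [mem_coe, rewireFiber, mem_filter] at hp hp'
  obtain ⟨⟨⟨-, hacyc⟩, hX⟩, rfl⟩ := hp.imp_left mem_rewireDomain.mp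
  obtain ⟨⟨⟨-, hacyc'⟩, hX'⟩, hG⟩ := hp'.imp_left mem_rewireDomain.mp
  have hE : p.1 = p'.1 := eq_of_rewire_eq hacyc.isTopOrder_topOrder hacyc'.isTopOrder_topOrder
    hX hX' hG.symm h
  refine Prod.ext hE (rewire_injOn_right hacyc'.isTopOrder_topOrder (σ := topOrder p'.1) ?_ hX' ?_)
  · simpa [hE] using hX
  · simpa [hE] using hG.symm

lemma card_rewireFiber_le (G : ArcSet n) (hG : ∀ S ∈ cycleSets G, #S ≤ L) :
    #(rewireFiber L G) ≤ 3 ^ (#(cycleSets G) * L.choose 2) := by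
  set U := (cycleSets G).biUnion fun S => (S ×ˢ S).filter fun e => e.1 < e.2
  have hU : #U ≤ #(cycleSets G) * L.choose 2 := by
    calc #U ≤ ∑ S ∈ cycleSets G, #((S ×ˢ S).filter fun e => e.1 < e.2) := card_biUnion_le
      _ ≤ ∑ _S ∈ cycleSets G, L.choose 2 := sum_le_sum fun S hS => by
          rw [card_product_filter_lt]; exact Nat.choose_le_choose 2 (hG S hS)
      _ = #(cycleSets G) * L.choose 2 := by rw [sum_const, smul_eq_mul]
  have hmem : ∀ p ∈ rewireFiber L G, IsOriented p.1 := fun p hp =>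
    (mem_rewireDomain.mp (mem_filter.mp hp).1).1.1
  calc #(rewireFiber L G)
      = #((rewireFiber L G).image fun p => p.1.filter (CoveredBy (cycleSets G))) :=
        (card_image_of_injOn (injOn_filter_coveredBy G)).symm
    _ ≤ 3 ^ #U := by
        refine card_le_three_pow U _ ?_ ?_ <;> simp only [mem_image] <;>
          rintro _ ⟨p, hp, rfl⟩ a ha <;> obtain ⟨ha, S, hS, h₁, h₂⟩ := mem_filter.mp ha
        · have hne : a.1 ≠ a.2 := fun h =>
            (hmem p hp).1 a.1 (by rwa [show (a.1, a.1) = a from Prod.ext rfl h])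
          rcases hne.lt_or_gt with hlt | hgt
          · exact Or.inl (mem_biUnion.mpr ⟨S, hS, mem_filter.mpr ⟨mem_product.mpr ⟨h₁, h₂⟩, hlt⟩⟩)
          · exact Or.inr (mem_biUnion.mpr ⟨S, hS, mem_filter.mpr ⟨mem_product.mpr ⟨h₂, h₁⟩, hgt⟩⟩)
        · exact fun hswap => (hmem p hp).2 a.1 a.2 ha (mem_filter.mp hswap).1
    _ ≤ 3 ^ (#(cycleSets G) * L.choose 2) := Nat.pow_le_pow_right (by norm_num) hU

lemma sum_rewireFiber_le {b : ℕ} (hb : 3 ^ L.choose 2 ≤ b) (G : ArcSet n) :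
    ∑ p ∈ rewireFiber L G, b ^ (n / L - #p.2) ≤ b ^ (n / L) := by
  rcases (rewireFiber L G).eq_empty_or_nonempty with hempty | ⟨p₀, hp₀⟩
  · simp [hempty]
  obtain ⟨hp₀D, rfl⟩ := mem_filter.mp hp₀
  set j := #(cycleSets (rewire (topOrder p₀.1) L p₀.1 p₀.2))
  have hcard : ∀ p ∈ rewireFiber L (rewire (topOrder p₀.1) L p₀.1 p₀.2), #p.2 = j := by
    intro p hp
    obtain ⟨hpD, hpG⟩ := mem_filter.mp hp
    rw [card_eq_card_cycleSets hpD, hpG]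
  have hj : j ≤ n / L :=
    calc j = #p₀.2 := (card_eq_card_cycleSets hp₀D).symm
      _ ≤ #(range (n / L)) := card_le_card (mem_rewireDomain.mp hp₀D).2
      _ = n / L := card_range _
  calc ∑ p ∈ rewireFiber L _, b ^ (n / L - #p.2)
      = #(rewireFiber L (rewire (topOrder p₀.1) L p₀.1 p₀.2)) * b ^ (n / L - j) := by
        rw [sum_congr rfl fun p hp => by rw [hcard p hp], sum_const, smul_eq_mul]
    _ ≤ 3 ^ (j * L.choose 2) * b ^ (n / L - j) :=
        Nat.mul_le_mul_right _ (card_rewireFiber_le _ fun S hS => card_le_of_mem_cycleSets hp₀D hS)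
    _ ≤ b ^ j * b ^ (n / L - j) := by
        rw [mul_comm j, pow_mul]
        exact Nat.mul_le_mul_right _ (Nat.pow_le_pow_left hb j)
    _ = b ^ (n / L) := by rw [← pow_add, Nat.add_sub_cancel' hj]

end Counting

theorem card_F0_mul_le_fnk_mul {k L b : ℕ} [NeZero k] (hL : 3 ≤ L) (hLk : L ≠ k)
    (hb : 3 ^ L.choose 2 ≤ b) (n : ℕ) :
    #(F0 n) * (b + 1) ^ (n / L) ≤ fnk n k * b ^ (n / L) := by
  have : NeZero L := ⟨by omega⟩
  have hmaps : ∀ p ∈ rewireDomain L n, rewire (topOrder p.1) L p.1 p.2 ∈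
      univ.filter fun G : ArcSet n => IsOriented G ∧ CkFree k G := by
    intro p hp
    obtain ⟨⟨-, hacyc⟩, -⟩ := mem_rewireDomain.mp hp
    simpa using ⟨rewire_isOriented hacyc.isTopOrder_topOrder hL,
      rewire_ckFree hacyc.isTopOrder_topOrder hLk⟩
  calc #(F0 n) * (b + 1) ^ (n / L)
      = ∑ p ∈ rewireDomain L n, b ^ (n / L - #p.2) := by
        have hX : ∑ X ∈ (range (n / L)).powerset, b ^ (n / L - #X) = (b + 1) ^ (n / L) := by
          simpa [add_comm] using sum_pow_mul_eq_add_pow 1 b (range (n / L))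
        simp [rewireDomain, sum_product, hX]
    _ = ∑ G ∈ univ.filter (fun G : ArcSet n => IsOriented G ∧ CkFree k G),
          ∑ p ∈ rewireFiber L G, b ^ (n / L - #p.2) :=
        (sum_fiberwise_of_maps_to hmaps _).symm
    _ ≤ fnk n k * b ^ (n / L) := by
        rw [fnk, ← smul_eq_mul, ← sum_const]
        exact sum_le_sum fun G _ => sum_rewireFiber_le hb G

lemma two_rpow_le_pow (n : ℕ) (hn : 4 ≤ n) :
    (2 : ℝ) ^ (((2 : ℝ) ^ 13)⁻¹ * n) ≤ ((730 : ℝ) / 729) ^ (n / 4) := by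
  have hexp : ((2 : ℝ) ^ 13)⁻¹ * n ≤ (1024 : ℝ)⁻¹ * (n / 4 : ℕ) := by
    have : (n : ℝ) ≤ 8 * (n / 4 : ℕ) := by exact_mod_cast (by omega : n ≤ 8 * (n / 4))
    norm_num
    linarith
  have hbase : (2 : ℝ) ^ (1024 : ℝ)⁻¹ ≤ 730 / 729 := by
    rw [Real.rpow_inv_le_iff_of_pos zero_le_two (by norm_num) (by norm_num),
      show (1024 : ℝ) = (1024 : ℕ) by norm_num, Real.rpow_natCast]
    calc (2 : ℝ) ≤ 1 + (1024 : ℕ) * (1 / 729) := by norm_num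
      _ ≤ (1 + 1 / 729) ^ 1024 := one_add_mul_le_pow (by norm_num) _
      _ = (730 / 729) ^ 1024 := by norm_num
  calc (2 : ℝ) ^ (((2 : ℝ) ^ 13)⁻¹ * n)
      ≤ (2 : ℝ) ^ ((1024 : ℝ)⁻¹ * (n / 4 : ℕ)) := Real.rpow_le_rpow_of_exponent_le one_le_two hexp
    _ = ((2 : ℝ) ^ (1024 : ℝ)⁻¹) ^ (n / 4) := by rw [Real.rpow_mul zero_le_two, Real.rpow_natCast]
    _ ≤ ((730 : ℝ) / 729) ^ (n / 4) := by gcongr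

/-- For `k ≥ 3`, `c = 2⁻¹³` and all large `n`,
`f(n,C_k) ≥ 2^{cn} |F_0| ≥ 2^{C(n,2) + cn}`. -/
theorem fnk_lower_bound (k : ℕ) (hk : 3 ≤ k) :
    ∃ N : ℕ, ∀ n ≥ N,
      (2 : ℝ) ^ (((2 : ℝ) ^ 13)⁻¹ * n) * ((F0 n).card : ℝ) ≤ (fnk n k : ℝ) ∧
      (2 : ℝ) ^ ((n.choose 2 : ℝ) + ((2 : ℝ) ^ 13)⁻¹ * n) ≤
        (2 : ℝ) ^ (((2 : ℝ) ^ 13)⁻¹ * n) * ((F0 n).card : ℝ) := by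
  refine ⟨4, fun n hn => ⟨?_, ?_⟩⟩
  · set L := if k = 3 then 4 else 3
    obtain ⟨hL3, hL4, hLk, hb⟩ : 3 ≤ L ∧ L ≤ 4 ∧ L ≠ k ∧ 3 ^ L.choose 2 ≤ 729 := by
      simp only [L]; split_ifs <;> simp [Nat.choose] <;> omega
    have : NeZero k := ⟨by omega⟩
    have hcount : ((F0 n).card : ℝ) * (729 + 1) ^ (n / L) ≤ fnk n k * 729 ^ (n / L) := by
      exact_mod_cast card_F0_mul_le_fnk_mul hL3 hLk hb n
    have hexp : n / 4 ≤ n / L := Nat.div_le_div_left hL4 (by omega)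
    calc (2 : ℝ) ^ (((2 : ℝ) ^ 13)⁻¹ * n) * (F0 n).card
        ≤ ((730 : ℝ) / 729) ^ (n / L) * (F0 n).card := by
          gcongr
          exact (two_rpow_le_pow n hn).trans (pow_le_pow_right₀ (by norm_num) hexp)
      _ ≤ fnk n k := by
          rw [div_pow, div_mul_eq_mul_div, div_le_iff₀ (by positivity)]
          linarith
  · rw [Real.rpow_add two_pos, Real.rpow_natCast, mul_comm]
    gcongr
    exact_mod_cast two_pow_choose_two_le_card_F0 n
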